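/- For every n-player cake-cutting instance in class X(2), there exists an envy-free contiguous allocation in which every player's interval contains the more valuable of his two owned pieces; in particular, this allocation has utilitarian welfare at least n/2, and hence every envy-free contiguous allocation of maximal utilitarian welfare has utilitarian welfare at least n/2. -/

import Mathlib

open MeasureTheory Set

/-- An `n`-player cake-cutting instance: continuous nonnegative density functions
on `[0,1]`, each of total integral `1`. -/
structure CakeInstance (n : ℕ) where
  d : Fin n → ℝ → ℝ
  cont : ∀ i, ContinuousOn (d i) (Set.Icc 0 1)
  nonneg : ∀ i, ∀ x ∈ Set.Icc (0:ℝ) 1, 0 ≤ d i x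
  total : ∀ i, ∫ x in (0:ℝ)..1, d i x = 1

namespace CakeInstance

/-- Value of player `i` for the interval `[a,b]`. -/
noncomputable def ival {n : ℕ} (C : CakeInstance n) (i : Fin n) (a b : ℝ) : ℝ :=
  ∫ x in a..b, C.d i x

/-- Value of player `i` for a set `S`. -/
noncomputable def sval {n : ℕ} (C : CakeInstance n) (i : Fin n) (S : Set ℝ) : ℝ :=
  ∫ x in S, C.d i x

end CakeInstance

/-- A contiguous allocation: weakly increasing cut points `x 0 = 0 ≤ … ≤ x n = 1`
together with a permutation `σ` assigning the `j`-th interval `[x j, x (j+1)]`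
to player `σ j`. -/
structure ContigAlloc (n : ℕ) where
  x : Fin (n+1) → ℝ
  mono : Monotone x
  first : x 0 = 0
  last : x (Fin.last n) = 1
  σ : Equiv.Perm (Fin n)

/-- The (closed) interval received by player `i` in a contiguous allocation. -/
def cpiece {n : ℕ} (A : ContigAlloc n) (i : Fin n) : Set ℝ :=
  Set.Icc (A.x (A.σ.symm i).castSucc) (A.x (A.σ.symm i).succ)

/-- Value of player `i` for the interval received by player `j`. -/
noncomputable def cval {n : ℕ} (C : CakeInstance n) (A : ContigAlloc n) (i j : Fin n) : ℝ :=
  C.ival i (A.x (A.σ.symm j).castSucc) (A.x (A.σ.symm j).succ)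

/-- Utilitarian welfare of a contiguous allocation. -/
noncomputable def cWelfare {n : ℕ} (C : CakeInstance n) (A : ContigAlloc n) : ℝ :=
  ∑ i, cval C A i i

/-- Egalitarian welfare of a contiguous allocation. -/
noncomputable def cEgal {n : ℕ} (C : CakeInstance n) (A : ContigAlloc n) : ℝ :=
  ⨅ i, cval C A i i

/-- A contiguous allocation is envy-free if nobody prefers another player's interval. -/
def cEnvyFree {n : ℕ} (C : CakeInstance n) (A : ContigAlloc n) : Prop :=
  ∀ i j, cval C A i j ≤ cval C A i i

/-- A `k`-piece allocation: each player `i` receives the union of (at most) `k`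
closed intervals `[lo i m, hi i m] ⊆ [0,1]` (possibly degenerate); all these
intervals are pairwise non-overlapping and together they cover `[0,1]`. -/
structure KPieceAlloc (n k : ℕ) where
  lo : Fin n → Fin k → ℝ
  hi : Fin n → Fin k → ℝ
  le : ∀ i m, lo i m ≤ hi i m
  sub : ∀ i m, Set.Icc (lo i m) (hi i m) ⊆ Set.Icc (0:ℝ) 1
  nonoverlap : ∀ i m i' m', (i, m) ≠ (i', m') →
      Set.Ioo (lo i m) (hi i m) ∩ Set.Ioo (lo i' m') (hi i' m') = ∅
  cover : (⋃ i, ⋃ m, Set.Icc (lo i m) (hi i m)) = Set.Icc (0:ℝ) 1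

/-- Value of player `i` for the portion received by player `j` in a `k`-piece allocation. -/
noncomputable def kval {n k : ℕ} (C : CakeInstance n) (A : KPieceAlloc n k) (i j : Fin n) : ℝ :=
  ∑ m, C.ival i (A.lo j m) (A.hi j m)

/-- Utilitarian welfare of a `k`-piece allocation. -/
noncomputable def kWelfare {n k : ℕ} (C : CakeInstance n) (A : KPieceAlloc n k) : ℝ :=
  ∑ i, kval C A i i

/-- Egalitarian welfare of a `k`-piece allocation. -/
noncomputable def kEgal {n k : ℕ} (C : CakeInstance n) (A : KPieceAlloc n k) : ℝ :=
  ⨅ i, kval C A i i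

/-- A `k`-piece allocation is envy-free if nobody prefers another player's portion. -/
def kEnvyFree {n k : ℕ} (C : CakeInstance n) (A : KPieceAlloc n k) : Prop :=
  ∀ i j, kval C A i j ≤ kval C A i i

/-- A witness that an `n`-player cake-cutting instance lies in the class `X(k)`:
cut points `0 = c 0 < c 1 < … < c (n*k) = 1` and an ownership map under which each
player owns exactly `k` of the pieces `[c j, c (j+1)]` and values the unowned pieces `0`. -/
structure XkWitness {n : ℕ} (C : CakeInstance n) (k : ℕ) where
  c : Fin (n*k+1) → ℝ
  mono : StrictMono c
  first : c 0 = 0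
  last : c (Fin.last (n*k)) = 1
  owner : Fin (n*k) → Fin n
  ownCount : ∀ i : Fin n, (Finset.univ.filter fun j => owner j = i).card = k
  zeroVal : ∀ (i : Fin n) (j : Fin (n*k)), owner j ≠ i →
      C.ival i (c j.castSucc) (c j.succ) = 0

/-- The `j`-th owned piece, as a set. -/
def XkWitness.pieceSet {n k : ℕ} {C : CakeInstance n} (W : XkWitness C k)
    (j : Fin (n*k)) : Set ℝ :=
  Set.Icc (W.c j.castSucc) (W.c j.succ)

/-- Value of player `i` for the `j`-th owned piece. -/
noncomputable def XkWitness.pieceVal {n k : ℕ} {C : CakeInstance n} (W : XkWitness C k)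
    (i : Fin n) (j : Fin (n*k)) : ℝ :=
  C.ival i (W.c j.castSucc) (W.c j.succ)

/-- A `k`-piece allocation gives each player exactly the pieces he owns:
every owned piece occurs among its owner's allocated intervals. -/
def XkWitness.givesOwnedPieces {n k : ℕ} {C : CakeInstance n} (W : XkWitness C k)
    (A : KPieceAlloc n k) : Prop :=
  ∀ j : Fin (n*k), ∃ m : Fin k,
    A.lo (W.owner j) m = W.c j.castSucc ∧ A.hi (W.owner j) m = W.c j.succ

/-! Each player's better owned piece is worth at least `1/2` to him, since his two pieces carry
all of his value. These best pieces are pairwise distinct, so taking them in left-to-right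
order and stretching each one up to the start of the next gives a contiguous allocation in
which everyone gets at least `1/2`; the other intervals are disjoint from his, so each of
them is worth at most `1/2` to him, and the allocation is envy-free. -/

lemma mem_Icc_of_monotone {N : ℕ} {c : Fin (N + 1) → ℝ} (hc : Monotone c) (h0 : c 0 = 0)
    (h1 : c (Fin.last N) = 1) (t : Fin (N + 1)) : c t ∈ Icc (0 : ℝ) 1 :=
  ⟨h0 ▸ hc (Fin.zero_le t), h1 ▸ hc (Fin.le_last t)⟩

namespace CakeInstance

variable {n : ℕ} (C : CakeInstance n) (i : Fin n)

lemma intervalIntegrable {a b : ℝ} (ha : a ∈ Icc (0 : ℝ) 1) (hb : b ∈ Icc (0 : ℝ) 1) :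
    IntervalIntegrable (C.d i) volume a b :=
  ((C.cont i).mono (uIcc_subset_Icc ha hb)).intervalIntegrable

lemma ival_nonneg {a b : ℝ} (h0 : 0 ≤ a) (hab : a ≤ b) (h1 : b ≤ 1) : 0 ≤ C.ival i a b :=
  intervalIntegral.integral_nonneg hab fun x hx => C.nonneg i x ⟨h0.trans hx.1, hx.2.trans h1⟩

lemma ival_le_of_Icc_subset {a b p q : ℝ} (h0 : 0 ≤ a) (h1 : b ≤ 1) (hpq : p ≤ q)
    (h : Icc p q ⊆ Icc a b) : C.ival i p q ≤ C.ival i a b := by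
  obtain ⟨hap, hqb⟩ := (Icc_subset_Icc_iff hpq).mp h
  have hab : a ≤ b := hap.trans (hpq.trans hqb)
  refine intervalIntegral.integral_mono_interval hap hpq hqb ?_
    (C.intervalIntegrable i ⟨h0, hab.trans h1⟩ ⟨h0.trans hab, h1⟩)
  exact ae_restrict_of_forall_mem measurableSet_Ioc fun x hx =>
    C.nonneg i x ⟨h0.trans hx.1.le, hx.2.trans h1⟩

lemma ival_eq_sub {a b : ℝ} (ha : a ∈ Icc (0 : ℝ) 1) (hb : b ∈ Icc (0 : ℝ) 1) :
    C.ival i a b = C.ival i 0 b - C.ival i 0 a :=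
  (intervalIntegral.integral_interval_sub_left
    (C.intervalIntegrable i ⟨le_rfl, zero_le_one⟩ hb)
    (C.intervalIntegrable i ⟨le_rfl, zero_le_one⟩ ha)).symm

lemma sum_ival {N : ℕ} (c : Fin (N + 1) → ℝ) (hc : ∀ t, c t ∈ Icc (0 : ℝ) 1) :
    ∑ t : Fin N, C.ival i (c t.castSucc) (c t.succ) = C.ival i (c 0) (c (Fin.last N)) := by
  induction N with
  | zero => simp [ival]
  | succ N ih =>
    rw [Fin.sum_univ_castSucc]
    simp only [Fin.succ_castSucc]
    rw [ih (fun t => c t.castSucc) (fun t => hc _),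
      C.ival_eq_sub i (hc _) (hc _), C.ival_eq_sub i (hc _) (hc _),
      C.ival_eq_sub i (hc _) (hc _)]
    simp only [Fin.castSucc_zero, Fin.succ_last]
    ring

lemma sum_ival_eq_one {N : ℕ} {c : Fin (N + 1) → ℝ} (hc : Monotone c) (h0 : c 0 = 0)
    (h1 : c (Fin.last N) = 1) : ∑ t : Fin N, C.ival i (c t.castSucc) (c t.succ) = 1 := by
  rw [C.sum_ival i c (mem_Icc_of_monotone hc h0 h1), h0, h1]
  exact C.total i

end CakeInstance

section ContigAlloc

variable {n : ℕ} (C : CakeInstance n) (A : ContigAlloc n)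

lemma ContigAlloc.x_mem_Icc (m : Fin (n + 1)) : A.x m ∈ Icc (0 : ℝ) 1 :=
  mem_Icc_of_monotone A.mono A.first A.last m

lemma cval_nonneg (i j : Fin n) : 0 ≤ cval C A i j :=
  C.ival_nonneg i (A.x_mem_Icc _).1 (A.mono (Fin.castSucc_le_succ _)) (A.x_mem_Icc _).2

lemma sum_cval (i : Fin n) : ∑ j, cval C A i j = 1 :=
  (Equiv.sum_comp A.σ.symm fun m => C.ival i (A.x m.castSucc) (A.x m.succ)).trans
    (C.sum_ival_eq_one i A.mono A.first A.last)

lemma ival_le_cval {i j : Fin n} {p q : ℝ} (hpq : p ≤ q) (h : Icc p q ⊆ cpiece A j) :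
    C.ival i p q ≤ cval C A i j :=
  C.ival_le_of_Icc_subset i (A.x_mem_Icc _).1 (A.x_mem_Icc _).2 hpq h

lemma cEnvyFree_of_half_le_cval (h : ∀ i, 1 / 2 ≤ cval C A i i) : cEnvyFree C A := by
  intro i j
  rcases eq_or_ne i j with rfl | hij
  · exact le_rfl
  have := Finset.add_le_sum (fun k _ => cval_nonneg C A i k) (Finset.mem_univ i)
    (Finset.mem_univ j) hij
  linarith [sum_cval C A i, h i]

lemma mul_le_cWelfare {v : ℝ} (h : ∀ i, v ≤ cval C A i i) : n * v ≤ cWelfare C A := by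
  simpa [cWelfare] using
    Finset.card_nsmul_le_sum Finset.univ (fun i => cval C A i i) v fun i _ => h i

end ContigAlloc

lemma exists_contigAlloc_of_sorted {n : ℕ} (hn : n ≠ 0) (σ : Equiv.Perm (Fin n))
    {a b : Fin n → ℝ} (ha : ∀ i, 0 ≤ a i) (hab : ∀ i, a i ≤ b i) (hb : ∀ i, b i ≤ 1)
    (hsep : ∀ i j, σ.symm i < σ.symm j → b i ≤ a j) :
    ∃ A : ContigAlloc n, ∀ i, Icc (a i) (b i) ⊆ cpiece A i := by
  let x : Fin (n + 1) → ℝ := fun k =>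
    if (k : ℕ) = 0 then 0 else if h : (k : ℕ) < n then a (σ ⟨k, h⟩) else 1
  have hleft : ∀ m, x m.castSucc ≤ a (σ m) := by
    intro m
    by_cases hm : (m : ℕ) = 0
    · simp only [x, Fin.val_castSucc, if_pos hm]
      exact ha _
    · simp only [x, Fin.val_castSucc, if_neg hm, dif_pos m.isLt, le_refl]
  have hright : ∀ m, b (σ m) ≤ x m.succ := by
    intro m
    by_cases hm : (m : ℕ) + 1 < n
    · have : σ.symm (σ m) < σ.symm (σ ⟨m + 1, hm⟩) := by simp [Fin.lt_def]
      simpa [x, hm] using hsep _ _ this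
    · simp [x, hm, hb]
  refine ⟨{ x := x, mono := ?_, first := by simp [x], last := by simp [x, hn], σ := σ },
    fun i => ?_⟩
  · exact Fin.monotone_iff_le_succ.mpr fun m => (hleft m).trans ((hab _).trans (hright m))
  · simpa [cpiece] using Icc_subset_Icc (hleft (σ.symm i)) (hright (σ.symm i))

lemma exists_contigAlloc_of_injective {n N : ℕ} (hn : n ≠ 0) {c : Fin (N + 1) → ℝ}
    (hc : Monotone c) (h0 : c 0 = 0) (h1 : c (Fin.last N) = 1) {p : Fin n → Fin N}
    (hp : Function.Injective p) :
    ∃ A : ContigAlloc n, ∀ i, Icc (c (p i).castSucc) (c (p i).succ) ⊆ cpiece A i := by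
  have hsort : StrictMono (p ∘ Tuple.sort p) :=
    (Tuple.monotone_sort p).strictMono_of_injective (hp.comp (Tuple.sort p).injective)
  have hsep : ∀ i j, (Tuple.sort p).symm i < (Tuple.sort p).symm j →
      c (p i).succ ≤ c (p j).castSucc := by
    intro i j hij
    have hpij : p i < p j := by simpa using hsort hij
    exact hc (Fin.castSucc_lt_iff_succ_le.mp (Fin.castSucc_lt_castSucc_iff.mpr hpij))
  exact exists_contigAlloc_of_sorted hn (Tuple.sort p)
    (fun i => (mem_Icc_of_monotone hc h0 h1 _).1) (fun i => hc (Fin.castSucc_le_succ _))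
    (fun i => (mem_Icc_of_monotone hc h0 h1 _).2) hsep

namespace XkWitness

variable {n k : ℕ} {C : CakeInstance n} (W : XkWitness C k)

lemma sum_pieceVal (i : Fin n) : ∑ t, W.pieceVal i t = 1 :=
  C.sum_ival_eq_one i W.mono.monotone W.first W.last

lemma exists_max_pieceVal (hk : k ≠ 0) (i : Fin n) :
    ∃ j, W.owner j = i ∧ ∀ j', W.owner j' = i → W.pieceVal i j' ≤ W.pieceVal i j := by
  have hne : (Finset.univ.filter fun j => W.owner j = i).Nonempty := by
    rw [← Finset.card_pos, W.ownCount]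
    exact Nat.pos_of_ne_zero hk
  obtain ⟨j, hj, hmax⟩ := Finset.exists_max_image _ (W.pieceVal i) hne
  exact ⟨j, (Finset.mem_filter.mp hj).2,
    fun j' hj' => hmax j' (Finset.mem_filter.mpr ⟨Finset.mem_univ _, hj'⟩)⟩

lemma one_le_mul_pieceVal {i : Fin n} {j : Fin (n * k)}
    (hmax : ∀ j', W.owner j' = i → W.pieceVal i j' ≤ W.pieceVal i j) :
    1 ≤ k * W.pieceVal i j := by
  -- only the `k` pieces owned by `i` carry value for him
  have hown : ∑ t ∈ Finset.univ.filter fun t => W.owner t = i, W.pieceVal i t = 1 := by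
    rw [Finset.sum_filter_of_ne (f := W.pieceVal i)
      fun t _ ht => by_contra fun h => ht (W.zeroVal i t h)]
    exact W.sum_pieceVal i
  have := Finset.sum_le_card_nsmul (Finset.univ.filter fun t => W.owner t = i) _
    (W.pieceVal i j) fun t ht => hmax t (Finset.mem_filter.mp ht).2
  rwa [hown, W.ownCount, nsmul_eq_mul] at this

end XkWitness

/-- In an instance in `X(2)` there is an envy-free contiguous allocation
giving each player (an interval containing) the more valuable of his two owned pieces;
in particular it has utilitarian welfare at least `n/2`, and hence every envy-free
contiguous allocation of maximal utilitarian welfare has welfare at least `n/2`. -/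
theorem two_pieces_ef_welfare (n : ℕ) (hn : 1 ≤ n) (C : CakeInstance n)
    (W : XkWitness C 2) :
    (∃ A : ContigAlloc n, cEnvyFree C A ∧
        (∀ i : Fin n, ∃ j : Fin (n*2), W.owner j = i ∧
          (∀ j' : Fin (n*2), W.owner j' = i → W.pieceVal i j' ≤ W.pieceVal i j) ∧
          W.pieceSet j ⊆ cpiece A i) ∧
        (n:ℝ)/2 ≤ cWelfare C A) ∧
    (∀ B : ContigAlloc n, cEnvyFree C B →
        (∀ B' : ContigAlloc n, cEnvyFree C B' → cWelfare C B' ≤ cWelfare C B) →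
        (n:ℝ)/2 ≤ cWelfare C B) := by
  choose best hown hmax using W.exists_max_pieceVal two_ne_zero
  have hinj : Function.Injective best := fun i j h => by rw [← hown i, ← hown j, h]
  obtain ⟨A, hA⟩ :=
    exists_contigAlloc_of_injective (by omega) W.mono.monotone W.first W.last hinj
  have hhalf : ∀ i, 1 / 2 ≤ cval C A i i := fun i => by
    have hbest := W.one_le_mul_pieceVal (hmax i)
    have hle : W.pieceVal i (best i) ≤ cval C A i i :=
      ival_le_cval C A (W.mono.monotone (Fin.castSucc_le_succ _)) (hA i)
    push_cast at hbest
    linarith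
  have hEF : cEnvyFree C A := cEnvyFree_of_half_le_cval C A hhalf
  have hwel : (n : ℝ) / 2 ≤ cWelfare C A := by
    linarith [mul_le_cWelfare C A hhalf]
  exact ⟨⟨A, hEF, fun i => ⟨best i, hown i, hmax i, hA i⟩, hwel⟩,
    fun B _ hBmax => hwel.trans (hBmax A hEF)⟩
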